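/- arXiv:math/0505639 — 2 statements merged into one kernel-verified Lean document; each statement's English description precedes it below -/
import Mathlib

section
/- (Population spacings limit underlying Theorem 6.1(ii), type 3 tails) Under the linear quantile regression setup with type 3 tails of index ξ < 0, there exists a vector c ∈ ℝ^d with μ_Xᵀc = 1, xᵀc > 0 and K(x) = (xᵀc)^{1/ξ} for all x ∈ 𝐗, such that for all x, ẋ ∈ 𝐗, every l > 0 and every m ∈ (0,1) ∪ (1,∞): xᵀ(γ(m l τ) − γ(l τ)) / (ẋᵀ(γ(m τ) − γ(τ))) → l^{−ξ}·(xᵀc)/(ẋᵀc) as τ ↘ 0, with ẋᵀ(γ(mτ) − γ(τ)) ≠ 0 for all sufficiently small τ (all quantile arguments lying in (0,η] for τ small enough). -/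
/-!
Write `q` for the quantile function of `Fu`. Inverting the regular variation of `Fu` gives
`q (m τ) / q τ → m ^ (-ξ)`. Tail equivalence, `F (·|x) ≈ K x • Fu` near `0`, squeezes the
conditional quantile `xᵀγ(τ)` between `q (τ / (K x + ε))` and `q (τ / (K x - ε))`, so
`xᵀγ(τ) / q τ → K x ^ ξ` on the support. Because the second-moment matrix is positive definite,
the support spans `ℝ^d`; hence `γ(τ) / q τ` itself converges to a vector `c` with
`xᵀc = K x ^ ξ`. Each spacing divided by `q τ` then has an explicit limit, and the ratio of
two spacings is the ratio of these limits.
-/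

open MeasureTheory Filter Topology Real Set

noncomputable def quantile (F : ℝ → ℝ) (τ : ℝ) : ℝ := sInf {z | τ < F z}

section Quantile

variable {F : ℝ → ℝ} {τ z : ℝ}

theorem quantile_le (hb : BddBelow {z | τ < F z}) (h : τ < F z) : quantile F τ ≤ z :=
  csInf_le hb h

theorem le_of_lt_quantile (hb : BddBelow {z | τ < F z}) (h : z < quantile F τ) : F z ≤ τ :=
  not_lt.1 fun h' => h.not_ge (quantile_le hb h')

theorem lt_of_quantile_lt (hF : Monotone F) (hne : {z | τ < F z}.Nonempty)
    (h : quantile F τ < z) : τ < F z := by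
  obtain ⟨y, hy, hyz⟩ := exists_lt_of_csInf_lt hne h
  exact hy.trans_le (hF hyz.le)

theorem bddBelow_setOf_lt (hF : ∀ z ≤ 0, F z ≤ 0) (hτ : 0 ≤ τ) : BddBelow {z | τ < F z} :=
  ⟨0, fun z hz => not_lt.1 fun h => (hF z h.le).not_gt (hτ.trans_lt hz)⟩

end Quantile

theorem tendsto_const_mul_nhdsGT_zero {𝕜 : Type*} [Field 𝕜] [LinearOrder 𝕜]
    [IsStrictOrderedRing 𝕜] [TopologicalSpace 𝕜] [OrderTopology 𝕜] {r : 𝕜} (hr : 0 < r) :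
    Tendsto (fun z => r * z) (𝓝[>] 0) (𝓝[>] 0) :=
  tendsto_iff_comap.2 (comap_mulLeft_nhdsGT_zero hr).ge

structure IsType3Tail (F : ℝ → ℝ) (ξ : ℝ) : Prop where
  monotone : Monotone F
  index_neg : ξ < 0
  eq_zero_of_neg : ∀ z < 0, F z = 0
  pos_of_pos : ∀ z > 0, 0 < F z
  tendsto_div : ∀ v > 0, Tendsto (fun z => F (v * z) / F z) (𝓝[>] 0) (𝓝 (v ^ (-1 / ξ)))

namespace IsType3Tail

variable {F : ℝ → ℝ} {ξ τ : ℝ}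

theorem neg_one_div_index_pos (hF : IsType3Tail F ξ) : 0 < -1 / ξ :=
  div_pos_of_neg_of_neg (by norm_num) hF.index_neg

theorem rpow_neg_index_rpow (hF : IsType3Tail F ξ) {m : ℝ} (hm : 0 ≤ m) :
    (m ^ (-ξ)) ^ (-1 / ξ) = m := by
  rw [← rpow_mul hm, show -ξ * (-1 / ξ) = 1 by field_simp [hF.index_neg.ne], rpow_one]

theorem tendsto_nhdsGT_zero (hF : IsType3Tail F ξ) : Tendsto F (𝓝[>] 0) (𝓝 0) := by
  set L := sInf (F '' Ioi 0)
  have hL : Tendsto F (𝓝[>] 0) (𝓝 L) := hF.monotone.tendsto_nhdsGT 0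
  suffices L = 0 by rwa [this] at hL
  by_contra hL0
  -- a nonzero limit would force `F (2 z) / F z → 1`
  have h2 : Tendsto (fun z => F (2 * z) / F z) (𝓝[>] 0) (𝓝 1) := by
    have h := (hL.comp (tendsto_const_mul_nhdsGT_zero two_pos)).div hL hL0
    rwa [div_self hL0] at h
  exact (one_lt_rpow one_lt_two hF.neg_one_div_index_pos).ne'
    (tendsto_nhds_unique (hF.tendsto_div 2 two_pos) h2)

theorem eq_zero_of_nonpos (hF : IsType3Tail F ξ) {z : ℝ} (hz : z ≤ 0) : F z = 0 := by
  refine le_antisymm (le_trans (hF.monotone hz) ?_) ?_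
  · refine ge_of_tendsto hF.tendsto_nhdsGT_zero ?_
    filter_upwards [self_mem_nhdsWithin] with w hw using hF.monotone (le_of_lt hw)
  · rw [← hF.eq_zero_of_neg (z - 1) (by linarith)]
    exact hF.monotone (by linarith)

theorem bddBelow (hF : IsType3Tail F ξ) (hτ : 0 ≤ τ) : BddBelow {z | τ < F z} :=
  bddBelow_setOf_lt (fun _ hz => (hF.eq_zero_of_nonpos hz).le) hτ

theorem eventually_nonempty (hF : IsType3Tail F ξ) :
    ∀ᶠ τ in 𝓝[>] 0, {z | τ < F z}.Nonempty :=
  ((eventually_lt_nhds (hF.pos_of_pos 1 one_pos)).filter_mono nhdsWithin_le_nhds).mono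
    fun _ hτ => ⟨1, hτ⟩

theorem eventually_quantile_pos (hF : IsType3Tail F ξ) :
    ∀ᶠ τ in 𝓝[>] 0, 0 < quantile F τ := by
  filter_upwards [hF.eventually_nonempty, self_mem_nhdsWithin] with τ hne (hτ : 0 < τ)
  obtain ⟨z₀, hz₀τ, hz₀ : 0 < z₀⟩ :=
    ((hF.tendsto_nhdsGT_zero.eventually (eventually_lt_nhds hτ)).and self_mem_nhdsWithin).exists
  refine hz₀.trans_le (le_csInf hne fun z (hz : τ < F z) => not_lt.1 fun hzz => ?_)
  linarith [hF.monotone hzz.le]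

theorem tendsto_quantile (hF : IsType3Tail F ξ) :
    Tendsto (quantile F) (𝓝[>] 0) (𝓝[>] 0) := by
  refine tendsto_nhdsWithin_iff.2 ⟨tendsto_order.2 ⟨fun a ha => ?_, fun b hb => ?_⟩,
    hF.eventually_quantile_pos⟩
  · exact hF.eventually_quantile_pos.mono fun τ h => ha.trans h
  · filter_upwards [(eventually_lt_nhds (hF.pos_of_pos (b / 2) (half_pos hb))).filter_mono
      nhdsWithin_le_nhds, self_mem_nhdsWithin] with τ hτ (hτ0 : 0 < τ)
    exact (quantile_le (hF.bddBelow hτ0.le) hτ).trans_lt (half_lt_self hb)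

theorem eventually_mul_quantile_le (hF : IsType3Tail F ξ) {m w : ℝ} (hm : 0 < m) (hw : 0 < w)
    (hwm : w < m ^ (-ξ)) : ∀ᶠ τ in 𝓝[>] 0, w * quantile F τ ≤ quantile F (m * τ) := by
  obtain ⟨w', hww', hw'm⟩ := exists_between hwm
  have hw' : 0 < w' := hw.trans hww'
  have hpow : w' ^ (-1 / ξ) < m := by
    simpa only [hF.rpow_neg_index_rpow hm.le] using
      rpow_lt_rpow hw'.le hw'm hF.neg_one_div_index_pos
  have hu : 0 < w / w' := div_pos hw hw'
  have hlim := (hF.tendsto_div w' hw').comp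
    ((tendsto_const_mul_nhdsGT_zero hu).comp hF.tendsto_quantile)
  filter_upwards [hlim.eventually_lt_const hpow, hF.eventually_quantile_pos,
    (tendsto_const_mul_nhdsGT_zero hm).eventually hF.eventually_nonempty,
    self_mem_nhdsWithin] with τ hlt hq hne (hτ : 0 < τ)
  have hwq : w' * (w / w' * quantile F τ) = w * quantile F τ := by field_simp
  simp only [Function.comp_apply, hwq] at hlt
  -- `F (w q) < m F (u q) ≤ m τ` with `u = w / w' < 1`
  have hFu : F (w / w' * quantile F τ) ≤ τ :=
    le_of_lt_quantile (hF.bddBelow hτ.le)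
      (mul_lt_of_lt_one_left hq ((div_lt_one hw').2 hww'))
  have hFw : F (w * quantile F τ) < m * τ := by
    rw [div_lt_iff₀ (hF.pos_of_pos _ (mul_pos hu hq))] at hlt
    exact hlt.trans_le (mul_le_mul_of_nonneg_left hFu hm.le)
  exact le_csInf hne fun z (hz : m * τ < F z) => not_lt.1 fun hzw => by
    linarith [hF.monotone hzw.le]

theorem eventually_quantile_le_mul (hF : IsType3Tail F ξ) {m w : ℝ} (hm : 0 < m)
    (hmw : m ^ (-ξ) < w) : ∀ᶠ τ in 𝓝[>] 0, quantile F (m * τ) ≤ w * quantile F τ := by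
  obtain ⟨w', hmw', hw'w⟩ := exists_between hmw
  have hw' : 0 < w' := (rpow_pos_of_pos hm _).trans hmw'
  have hpow : m < w' ^ (-1 / ξ) := by
    simpa only [hF.rpow_neg_index_rpow hm.le] using
      rpow_lt_rpow (rpow_pos_of_pos hm _).le hmw' hF.neg_one_div_index_pos
  have hu : 0 < w / w' := div_pos (hw'.trans hw'w) hw'
  have hlim := (hF.tendsto_div w' hw').comp
    ((tendsto_const_mul_nhdsGT_zero hu).comp hF.tendsto_quantile)
  filter_upwards [hlim.eventually_const_lt hpow, hF.eventually_quantile_pos,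
    hF.eventually_nonempty, self_mem_nhdsWithin] with τ hlt hq hne (hτ : 0 < τ)
  have hwq : w' * (w / w' * quantile F τ) = w * quantile F τ := by field_simp
  simp only [Function.comp_apply, hwq] at hlt
  -- `m τ < m F (u q) < F (w q)` with `u = w / w' > 1`
  have hFu : τ < F (w / w' * quantile F τ) :=
    lt_of_quantile_lt hF.monotone hne (lt_mul_of_one_lt_left hq ((one_lt_div hw').2 hw'w))
  have hFw : m * τ < F (w * quantile F τ) := by
    rw [lt_div_iff₀ (hF.pos_of_pos _ (mul_pos hu hq))] at hlt
    exact (mul_lt_mul_of_pos_left hFu hm).trans hlt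
  exact quantile_le (hF.bddBelow (mul_pos hm hτ).le) hFw

theorem tendsto_quantile_mul_div (hF : IsType3Tail F ξ) {m : ℝ} (hm : 0 < m) :
    Tendsto (fun τ => quantile F (m * τ) / quantile F τ) (𝓝[>] 0) (𝓝 (m ^ (-ξ))) := by
  refine tendsto_order.2 ⟨fun a ha => ?_, fun b hb => ?_⟩
  · obtain ⟨w, haw, hwm⟩ := exists_between (max_lt ha (rpow_pos_of_pos hm (-ξ)))
    filter_upwards [hF.eventually_mul_quantile_le hm ((le_max_right _ _).trans_lt haw) hwm,
      hF.eventually_quantile_pos] with τ hle hq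
    rw [lt_div_iff₀ hq]
    exact (mul_lt_mul_of_pos_right ((le_max_left _ _).trans_lt haw) hq).trans_le hle
  · obtain ⟨w, hmw, hwb⟩ := exists_between hb
    filter_upwards [hF.eventually_quantile_le_mul hm hmw, hF.eventually_quantile_pos]
      with τ hle hq
    rw [div_lt_iff₀ hq]
    exact hle.trans_lt (mul_lt_mul_of_pos_right hwb hq)

theorem tendsto_quantile_div_const_div_quantile (hF : IsType3Tail F ξ) {c : ℝ} (hc : 0 < c) :
    Tendsto (fun τ => quantile F (τ / c) / quantile F τ) (𝓝[>] 0) (𝓝 (c ^ ξ)) := by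
  have h := hF.tendsto_quantile_mul_div (inv_pos.2 hc)
  rw [inv_rpow hc.le, ← rpow_neg hc.le, neg_neg] at h
  simpa only [inv_mul_eq_div] using h

theorem tendsto_quantile_comp_div_const (hF : IsType3Tail F ξ) {c : ℝ} (hc : 0 < c) :
    Tendsto (fun τ => quantile F (τ / c)) (𝓝[>] 0) (𝓝[>] 0) :=
  hF.tendsto_quantile.comp
    ((tendsto_const_mul_nhdsGT_zero (inv_pos.2 hc)).congr fun τ => inv_mul_eq_div c τ)

section TailEquivalence

variable {G : ℝ → ℝ} {c k : ℝ}

theorem eventually_mul_lt (hF : IsType3Tail F ξ)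
    (hGF : Tendsto (fun z => G z / F z) (𝓝[>] 0) (𝓝 k)) (hck : c < k) :
    ∀ᶠ z in 𝓝[>] 0, c * F z < G z := by
  filter_upwards [hGF.eventually_const_lt hck, self_mem_nhdsWithin] with z h (hz : 0 < z)
  rwa [lt_div_iff₀ (hF.pos_of_pos z hz)] at h

theorem eventually_lt_mul (hF : IsType3Tail F ξ)
    (hGF : Tendsto (fun z => G z / F z) (𝓝[>] 0) (𝓝 k)) (hkc : k < c) :
    ∀ᶠ z in 𝓝[>] 0, G z < c * F z := by
  filter_upwards [hGF.eventually_lt_const hkc, self_mem_nhdsWithin] with z h (hz : 0 < z)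
  rwa [div_lt_iff₀ (hF.pos_of_pos z hz)] at h

theorem nonpos_of_tendsto_div (hF : IsType3Tail F ξ) (hG : Monotone G)
    (hGF : Tendsto (fun z => G z / F z) (𝓝[>] 0) (𝓝 k)) {z : ℝ} (hz : z ≤ 0) : G z ≤ 0 := by
  have h := hF.tendsto_nhdsGT_zero.const_mul (k + 1)
  rw [mul_zero] at h
  refine ge_of_tendsto h ?_
  filter_upwards [hF.eventually_lt_mul hGF (lt_add_one k), self_mem_nhdsWithin] with w hw
    (hw0 : 0 < w)
  exact (hG (hz.trans hw0.le)).trans hw.le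

theorem eventually_quantile_le_quantile_div (hF : IsType3Tail F ξ)
    (hG : ∀ z ≤ 0, G z ≤ 0) (hc : 0 < c) (hcG : ∀ᶠ z in 𝓝[>] 0, c * F z < G z) :
    ∀ᶠ τ in 𝓝[>] 0, quantile G τ ≤ quantile F (τ / c) := by
  obtain ⟨z₀, hz₀ : 0 < z₀, hsub⟩ := mem_nhdsGT_iff_exists_Ioo_subset.1 hcG
  filter_upwards [(hF.tendsto_quantile_comp_div_const hc).eventually (Ioo_mem_nhdsGT hz₀),
    (tendsto_const_mul_nhdsGT_zero (inv_pos.2 hc)).eventually hF.eventually_nonempty,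
    self_mem_nhdsWithin] with τ hq hne (hτ : 0 < τ)
  rw [inv_mul_eq_div] at hne
  refine ge_of_tendsto
    (tendsto_id.mono_left nhdsWithin_le_nhds : Tendsto id (𝓝[>] (quantile F (τ / c))) _) ?_
  filter_upwards [Ioo_mem_nhdsGT hq.2] with w hw
  have hFw : τ / c < F w := lt_of_quantile_lt hF.monotone hne hw.1
  have hGw : c * F w < G w := hsub ⟨hq.1.trans hw.1, hw.2⟩
  refine quantile_le (bddBelow_setOf_lt hG hτ.le) ?_
  calc τ = c * (τ / c) := by field_simp
    _ < c * F w := mul_lt_mul_of_pos_left hFw hc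
    _ < G w := hGw

theorem eventually_quantile_div_le_quantile (hF : IsType3Tail F ξ)
    (hG : ∀ z ≤ 0, G z ≤ 0) (hc : 0 < c) (hGc : ∀ᶠ z in 𝓝[>] 0, G z < c * F z)
    (hne : ∀ᶠ τ in 𝓝[>] 0, {z | τ < G z}.Nonempty) :
    ∀ᶠ τ in 𝓝[>] 0, quantile F (τ / c) ≤ quantile G τ := by
  obtain ⟨z₀, hz₀ : 0 < z₀, hsub⟩ := mem_nhdsGT_iff_exists_Ioo_subset.1 hGc
  filter_upwards [(hF.tendsto_quantile_comp_div_const hc).eventually (Ioo_mem_nhdsGT hz₀),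
    hne, self_mem_nhdsWithin] with τ hq hneG (hτ : 0 < τ)
  refine le_csInf hneG fun z (hz : τ < G z) => ?_
  have hz0 : 0 < z := not_le.1 fun h => (hG z h).not_gt (hτ.trans hz)
  rcases lt_or_ge z z₀ with hzz | hzz
  · refine quantile_le (hF.bddBelow (div_pos hτ hc).le) ?_
    rw [div_lt_iff₀' hc]
    exact hz.trans (hsub ⟨hz0, hzz⟩)
  · exact hq.2.le.trans hzz

theorem tendsto_quantile_div_quantile_of_tendsto_div (hF : IsType3Tail F ξ) (hG : Monotone G)
    (hk : 0 < k) (hGF : Tendsto (fun z => G z / F z) (𝓝[>] 0) (𝓝 k)) :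
    Tendsto (fun τ => quantile G τ / quantile F τ) (𝓝[>] 0) (𝓝 (k ^ ξ)) := by
  have hG0 : ∀ z ≤ 0, G z ≤ 0 := fun _ hz => hF.nonpos_of_tendsto_div hG hGF hz
  have hGne : ∀ᶠ τ in 𝓝[>] 0, {z | τ < G z}.Nonempty := by
    obtain ⟨w, hw, hw0 : 0 < w⟩ :=
      ((hF.eventually_mul_lt hGF (half_lt_self hk)).and self_mem_nhdsWithin).exists
    have hGw : 0 < G w := (mul_pos (half_pos hk) (hF.pos_of_pos w hw0)).trans hw
    exact ((eventually_lt_nhds hGw).filter_mono nhdsWithin_le_nhds).mono fun _ hτ => ⟨w, hτ⟩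
  have hcont : ContinuousAt (fun c : ℝ => c ^ ξ) k :=
    continuousAt_rpow_const _ _ (Or.inl hk.ne')
  refine tendsto_order.2 ⟨fun a ha => ?_, fun b hb => ?_⟩
  · obtain ⟨c, hac, hkc : k < c⟩ := (((hcont.eventually (lt_mem_nhds ha)).filter_mono
      nhdsWithin_le_nhds).and (self_mem_nhdsWithin : Ioi k ∈ 𝓝[>] k)).exists
    have hc : 0 < c := hk.trans hkc
    filter_upwards [(hF.tendsto_quantile_div_const_div_quantile hc).eventually_const_lt hac,
      hF.eventually_quantile_div_le_quantile hG0 hc (hF.eventually_lt_mul hGF hkc) hGne,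
      hF.eventually_quantile_pos] with τ h1 h2 hq
    exact h1.trans_le (div_le_div_of_nonneg_right h2 hq.le)
  · obtain ⟨c, ⟨hcb, hc⟩, hck : c < k⟩ := ((((hcont.eventually (gt_mem_nhds hb)).and
      (lt_mem_nhds hk)).filter_mono nhdsWithin_le_nhds).and
      (self_mem_nhdsWithin : Iio k ∈ 𝓝[<] k)).exists
    filter_upwards [(hF.tendsto_quantile_div_const_div_quantile hc).eventually_lt_const hcb,
      hF.eventually_quantile_le_quantile_div hG0 hc (hF.eventually_mul_lt hGF hck),
      hF.eventually_quantile_pos] with τ h1 h2 hq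
    exact (div_le_div_of_nonneg_right h2 hq.le).trans_lt h1

end TailEquivalence

section Spacings

variable {f : ℝ → ℝ} {a : ℝ}

theorem tendsto_comp_mul_div_quantile (hF : IsType3Tail F ξ)
    (hf : Tendsto (fun τ => f τ / quantile F τ) (𝓝[>] 0) (𝓝 a)) {r : ℝ} (hr : 0 < r) :
    Tendsto (fun τ => f (r * τ) / quantile F τ) (𝓝[>] 0) (𝓝 (a * r ^ (-ξ))) := by
  have hr' := tendsto_const_mul_nhdsGT_zero hr
  refine ((hf.comp hr').mul (hF.tendsto_quantile_mul_div hr)).congr' ?_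
  filter_upwards [hr'.eventually hF.eventually_quantile_pos] with τ hq
  exact div_mul_div_cancel₀ hq.ne'

theorem tendsto_sub_div_quantile (hF : IsType3Tail F ξ)
    (hf : Tendsto (fun τ => f τ / quantile F τ) (𝓝[>] 0) (𝓝 a)) {l m : ℝ} (hl : 0 < l)
    (hm : 0 < m) :
    Tendsto (fun τ => (f (m * l * τ) - f (l * τ)) / quantile F τ) (𝓝[>] 0)
      (𝓝 (a * l ^ (-ξ) * (m ^ (-ξ) - 1))) := by
  have h := (hF.tendsto_comp_mul_div_quantile hf (mul_pos hm hl)).sub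
    (hF.tendsto_comp_mul_div_quantile hf hl)
  rw [mul_rpow hm.le hl.le] at h
  convert h using 2 with τ
  · exact sub_div _ _ _
  · ring

theorem tendsto_spacing_div_spacing (hF : IsType3Tail F ξ) {f' : ℝ → ℝ} {a' : ℝ}
    (hf : Tendsto (fun τ => f τ / quantile F τ) (𝓝[>] 0) (𝓝 a))
    (hf' : Tendsto (fun τ => f' τ / quantile F τ) (𝓝[>] 0) (𝓝 a')) (ha' : a' ≠ 0)
    {l m : ℝ} (hl : 0 < l) (hm : 0 < m) (hm1 : m ≠ 1) :
    Tendsto (fun τ => (f (m * l * τ) - f (l * τ)) / (f' (m * τ) - f' τ)) (𝓝[>] 0)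
        (𝓝 (l ^ (-ξ) * a / a')) ∧
      ∀ᶠ τ in 𝓝[>] 0, f' (m * τ) - f' τ ≠ 0 := by
  have hm1' : m ^ (-ξ) - 1 ≠ 0 := sub_ne_zero.2 fun h =>
    hm1 (by rw [← hF.rpow_neg_index_rpow hm.le, h, one_rpow])
  have hN := hF.tendsto_sub_div_quantile hf hl hm
  have hD := hF.tendsto_sub_div_quantile hf' one_pos hm
  simp only [mul_one, one_mul, one_rpow] at hD
  have hB := mul_ne_zero ha' hm1'
  refine ⟨?_, (hD.eventually_ne hB).mono fun τ h h0 => h (by rw [h0, zero_div])⟩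
  rw [show l ^ (-ξ) * a / a' = a * l ^ (-ξ) * (m ^ (-ξ) - 1) / (a' * (m ^ (-ξ) - 1)) by
    field_simp]
  exact (hN.div hD hB).congr' (hF.eventually_quantile_pos.mono fun τ hq =>
    div_div_div_cancel_right₀ hq.ne' _ _)

end Spacings

end IsType3Tail

theorem exists_forall_tendsto_dotProduct_of_span_eq_top {ι α : Type*} [Fintype ι]
    [DecidableEq ι] {S : Set (ι → ℝ)} (hS : Submodule.span ℝ S = ⊤) {l : Filter α} {g : α → ι → ℝ}
    (hg : ∀ x ∈ S, ∃ a, Tendsto (fun t => x ⬝ᵥ g t) l (𝓝 a)) :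
    ∃ c, ∀ y, Tendsto (fun t => y ⬝ᵥ g t) l (𝓝 (y ⬝ᵥ c)) := by
  have hspan : ∀ x, ∃ a, Tendsto (fun t => x ⬝ᵥ g t) l (𝓝 a) := by
    intro x
    have hx : x ∈ Submodule.span ℝ S := hS ▸ Submodule.mem_top
    induction hx using Submodule.span_induction with
    | mem x hx => exact hg x hx
    | zero => exact ⟨0, by simpa only [zero_dotProduct] using tendsto_const_nhds⟩
    | add x y _ _ hx hy =>
      obtain ⟨a, ha⟩ := hx
      obtain ⟨b, hb⟩ := hy
      exact ⟨a + b, by simpa only [add_dotProduct] using ha.add hb⟩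
    | smul r x _ hx =>
      obtain ⟨a, ha⟩ := hx
      exact ⟨r * a, by simpa only [smul_dotProduct, smul_eq_mul] using ha.const_mul r⟩
  choose c hc using fun i => hspan (Pi.single i 1)
  have hgc : Tendsto g l (𝓝 c) :=
    tendsto_pi_nhds.2 fun i => by simpa only [single_one_dotProduct] using hc i
  exact ⟨c, fun y => ((continuous_const.dotProduct continuous_id).tendsto c).comp hgc⟩

theorem span_eq_top_of_posDef_secondMoment {ι : Type*} [Fintype ι] [DecidableEq ι]
    {μ : Measure (ι → ℝ)} [IsFiniteMeasure μ] {S : Set (ι → ℝ)} (hSb : Bornology.IsBounded S)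
    (hS : ∀ᵐ x ∂μ, x ∈ S) (hM : (Matrix.of fun i j => ∫ x, x i * x j ∂μ).PosDef) :
    Submodule.span ℝ S = ⊤ := by
  by_contra hne
  obtain ⟨f, hf0, hker⟩ :=
    (Submodule.span ℝ S).exists_le_ker_of_lt_top (lt_top_iff_ne_top.2 hne)
  set v : ι → ℝ := fun j => f fun k => if j = k then 1 else 0
  have hfv : ∀ x, f x = ∑ j, x j * v j := fun x => by
    simpa only [smul_eq_mul] using f.pi_apply_eq_sum_univ x
  have hSv : ∀ᵐ x ∂μ, ∑ j, x j * v j = 0 := hS.mono fun x hx => by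
    rw [← hfv]
    exact hker (Submodule.subset_span hx)
  obtain ⟨R, hR0, hR⟩ := hSb.exists_pos_norm_le
  have hint : ∀ i j, Integrable (fun x : ι → ℝ => x i * x j) μ := fun i j =>
    Integrable.of_bound ((continuous_apply i).mul (continuous_apply j)).aestronglyMeasurable
      (R * R) (hS.mono fun x hx => by
        rw [norm_mul]
        exact mul_le_mul ((norm_le_pi_norm x i).trans (hR x hx))
          ((norm_le_pi_norm x j).trans (hR x hx)) (norm_nonneg _) hR0.le)
  have hMv : (Matrix.of fun i j => ∫ x, x i * x j ∂μ).mulVec v = 0 := by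
    ext i
    calc ∑ j, (∫ x, x i * x j ∂μ) * v j = ∑ j, ∫ x, x i * x j * v j ∂μ := by
          simp only [integral_mul_const]
      _ = ∫ x, ∑ j, x i * x j * v j ∂μ :=
          (integral_finsetSum _ fun j _ => (hint i j).mul_const _).symm
      _ = ∫ x, x i * ∑ j, x j * v j ∂μ := by simp only [Finset.mul_sum, mul_assoc]
      _ = 0 := integral_eq_zero_of_ae (hSv.mono fun x hx => by simp [hx])
  have hv : v = 0 :=
    Matrix.mulVec_injective_iff_isUnit.2 hM.isUnit (by rw [hMv, Matrix.mulVec_zero])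
  exact hf0 (LinearMap.ext fun x => by simp [hfv, hv])

theorem extremal_qr_population_spacings_type3_general
    (d : ℕ)
    (μ : Measure (Fin d → ℝ)) [IsProbabilityMeasure μ]
    (Xs : Set (Fin d → ℝ))
    (hXssupp : ∀ x, x ∈ Xs ↔ ∀ U ∈ 𝓝 x, 0 < μ U)
    (hXscpt : IsCompact Xs)
    (hposdef : (Matrix.of fun i j : Fin d => ∫ x, x i * x j ∂μ).PosDef)
    (η : ℝ) (hη : η ∈ Set.Ioc (0:ℝ) 1)
    (γ : ℝ → Fin d → ℝ)
    (F : (Fin d → ℝ) → ℝ → ℝ)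
    (hFmono : ∀ x ∈ Xs, Monotone (F x))
    (hlin : ∀ τ ∈ Set.Ioc (0:ℝ) η, ∀ x ∈ Xs, sInf {z | τ < F x z} = ∑ i, x i * γ τ i)
    (Fu : ℝ → ℝ)
    (hFumono : Monotone Fu)
    (hFuinv : ∀ τ ∈ Set.Ioc (0:ℝ) η, sInf {z | τ < Fu z} = ∑ i, (∫ x, x i ∂μ) * γ τ i)
    (K : (Fin d → ℝ) → ℝ)
    (hKpos : ∀ x ∈ Xs, 0 < K x)
    (ξ : ℝ) (hξ : ξ < 0)
    (hFu0 : ∀ z < (0:ℝ), Fu z = 0)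
    (hFupos : ∀ z > (0:ℝ), 0 < Fu z)
    (hreg : ∀ v > (0:ℝ), Tendsto (fun z => Fu (v * z) / Fu z) (𝓝[>] (0:ℝ)) (𝓝 (v ^ (-1/ξ))))
    (htaileq : TendstoUniformlyOn (fun z x => F x z / Fu z) K (𝓝[>] (0:ℝ)) Xs)
    :
    ∃ c : Fin d → ℝ, (∑ i, (∫ x, x i ∂μ) * c i) = 1 ∧
      (∀ x ∈ Xs, 0 < (∑ i, x i * c i) ∧ K x = (∑ i, x i * c i) ^ (1/ξ)) ∧
      ∀ x ∈ Xs, ∀ x' ∈ Xs, ∀ l > (0:ℝ), ∀ m ∈ Set.Ioo (0:ℝ) 1 ∪ Set.Ioi 1,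
        Tendsto (fun τ => (∑ i, x i * (γ (m * l * τ) i - γ (l * τ) i)) /
            (∑ i, x' i * (γ (m * τ) i - γ τ i))) (𝓝[>] (0:ℝ))
          (𝓝 (l ^ (-ξ) * (∑ i, x i * c i) / (∑ i, x' i * c i))) ∧
        ∀ᶠ τ in 𝓝[>] (0:ℝ), (∑ i, x' i * (γ (m * τ) i - γ τ i)) ≠ 0 := by
  have hFu : IsType3Tail Fu ξ := ⟨hFumono, hξ, hFu0, hFupos, hreg⟩
  have hη0 : Ioc 0 η ∈ 𝓝[>] (0 : ℝ) := Ioc_mem_nhdsGT hη.1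
  have hXs : ∀ x ∈ Xs, Tendsto (fun τ => x ⬝ᵥ γ τ / quantile Fu τ) (𝓝[>] 0) (𝓝 (K x ^ ξ)) :=
    fun x hx => (hFu.tendsto_quantile_div_quantile_of_tendsto_div (hFmono x hx) (hKpos x hx)
      (htaileq.tendsto_at hx)).congr' (eventually_of_mem hη0 fun τ hτ => by
        rw [quantile, hlin τ hτ x hx]; rfl)
  have hsupp : Xs = μ.support :=
    Set.ext fun x => (hXssupp x).trans (Measure.mem_support_iff_forall x).symm
  have hspan := span_eq_top_of_posDef_secondMoment hXscpt.isBounded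
    (hsupp ▸ Measure.support_mem_ae) hposdef
  obtain ⟨c, hc⟩ := exists_forall_tendsto_dotProduct_of_span_eq_top hspan
    (g := fun τ => (quantile Fu τ)⁻¹ • γ τ) fun x hx => ⟨_, (hXs x hx).congr fun τ => by
      rw [dotProduct_smul, smul_eq_mul, inv_mul_eq_div]⟩
  simp only [dotProduct_smul, smul_eq_mul, inv_mul_eq_div] at hc
  have hxc : ∀ x ∈ Xs, x ⬝ᵥ c = K x ^ ξ := fun x hx => tendsto_nhds_unique (hc x) (hXs x hx)
  refine ⟨c, ?_, fun x hx => ?_, fun x hx x' hx' l hl m hm => ?_⟩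
  · refine tendsto_nhds_unique (hc _) (tendsto_const_nhds.congr' ?_)
    filter_upwards [hη0, hFu.eventually_quantile_pos] with τ hτ hq
    exact (div_self hq.ne').symm.trans (congrArg (· / quantile Fu τ) (hFuinv τ hτ))
  · change 0 < x ⬝ᵥ c ∧ K x = (x ⬝ᵥ c) ^ (1 / ξ)
    rw [hxc x hx, ← rpow_mul (hKpos x hx).le, mul_one_div_cancel hξ.ne, rpow_one]
    exact ⟨rpow_pos_of_pos (hKpos x hx) ξ, rfl⟩
  · have hm0 : 0 < m := hm.elim (·.1) fun h => zero_lt_one.trans h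
    have hx'c : x' ⬝ᵥ c ≠ 0 := hxc x' hx' ▸ (rpow_pos_of_pos (hKpos x' hx') ξ).ne'
    have h := hFu.tendsto_spacing_div_spacing (hc x) (hc x') hx'c hl hm0
      (hm.elim (fun h => h.2.ne) fun h => h.ne')
    simp only [← dotProduct_sub] at h
    exact h

theorem extremal_qr_population_spacings_type3
    (d : ℕ) (hd : 1 ≤ d)
    (μ : Measure (Fin d → ℝ)) [IsProbabilityMeasure μ]
    (Xs : Set (Fin d → ℝ))
    (hXssupp : ∀ x, x ∈ Xs ↔ ∀ U ∈ 𝓝 x, 0 < μ U)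
    (hXscpt : IsCompact Xs)
    (hposdef : (Matrix.of fun i j : Fin d => ∫ x, x i * x j ∂μ).PosDef)
    (hmean : ∀ i : Fin d, (∫ x, x i ∂μ) = if (i : ℕ) = 0 then (1:ℝ) else 0)
    (η : ℝ) (hη : η ∈ Set.Ioc (0:ℝ) 1)
    (γ : ℝ → Fin d → ℝ)
    (F : (Fin d → ℝ) → ℝ → ℝ)
    (hFmono : ∀ x ∈ Xs, Monotone (F x))
    (hFrc : ∀ x ∈ Xs, ∀ z : ℝ, ContinuousWithinAt (F x) (Set.Ici z) z)
    (hFrange : ∀ x ∈ Xs, ∀ z : ℝ, F x z ∈ Set.Icc (0:ℝ) 1)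
    (hlin : ∀ τ ∈ Set.Ioc (0:ℝ) η, ∀ x ∈ Xs, sInf {z | τ < F x z} = ∑ i, x i * γ τ i)
    (Fu : ℝ → ℝ)
    (hFumono : Monotone Fu)
    (hFurc : ∀ z : ℝ, ContinuousWithinAt Fu (Set.Ici z) z)
    (hFurange : ∀ z : ℝ, Fu z ∈ Set.Icc (0:ℝ) 1)
    (hFuinv : ∀ τ ∈ Set.Ioc (0:ℝ) η, sInf {z | τ < Fu z} = ∑ i, (∫ x, x i ∂μ) * γ τ i)
    (K : (Fin d → ℝ) → ℝ)
    (hKcont : ContinuousOn K Xs)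
    (hKbdd : BddAbove (K '' Xs))
    (hKpos : ∀ x ∈ Xs, 0 < K x)
    (ξ : ℝ) (hξ : ξ < 0)
    (hFu0 : ∀ z < (0:ℝ), Fu z = 0)
    (hFupos : ∀ z > (0:ℝ), 0 < Fu z)
    (hreg : ∀ v > (0:ℝ), Tendsto (fun z => Fu (v * z) / Fu z) (𝓝[>] (0:ℝ)) (𝓝 (v ^ (-1/ξ))))
    (htaileq : TendstoUniformlyOn (fun z x => F x z / Fu z) K (𝓝[>] (0:ℝ)) Xs)
    :
    ∃ c : Fin d → ℝ, (∑ i, (∫ x, x i ∂μ) * c i) = 1 ∧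
      (∀ x ∈ Xs, 0 < (∑ i, x i * c i) ∧ K x = (∑ i, x i * c i) ^ (1/ξ)) ∧
      ∀ x ∈ Xs, ∀ x' ∈ Xs, ∀ l > (0:ℝ), ∀ m ∈ Set.Ioo (0:ℝ) 1 ∪ Set.Ioi 1,
        Tendsto (fun τ => (∑ i, x i * (γ (m * l * τ) i - γ (l * τ) i)) /
            (∑ i, x' i * (γ (m * τ) i - γ τ i))) (𝓝[>] (0:ℝ))
          (𝓝 (l ^ (-ξ) * (∑ i, x i * c i) / (∑ i, x' i * c i))) ∧
        ∀ᶠ τ in 𝓝[>] (0:ℝ), (∑ i, x' i * (γ (m * τ) i - γ τ i)) ≠ 0 :=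
  extremal_qr_population_spacings_type3_general d μ Xs hXssupp hXscpt hposdef η hη γ F hFmono hlin
    Fu hFumono hFuinv K hKpos ξ hξ hFu0 hFupos hreg htaileq
end

section
/- (Mean measure convergence, equations (9.40)–(9.41), type 3 tails) Under the linear quantile regression setup with type 3 tails of index ξ < 0, assume in addition that for each z ∈ ℝ the map x ↦ F(z|x) is Borel measurable on 𝐗. Then for every real u > 0 and every Borel set B ⊆ 𝐗: T·∫_B F(u·F_u⁻¹(1/T) | x) dμ(x) → u^{−1/ξ}·∫_B K(x) dμ(x) as the integer T → ∞. -/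
open MeasureTheory Filter Topology Real

/-!
Put `q = F_u⁻¹(τ)`. As `τ → 0⁺` we have `q → 0⁺`, and `τ ≤ F_u(q)` by right-continuity while
`F_u(v q) ≤ τ` for `v < 1`; regular variation squeezes `τ⁻¹ F_u(q) → 1`, hence
`τ⁻¹ F_u(u q) → u^(-1/ξ)`. Factoring `τ⁻¹ F(u q | x) = τ⁻¹ F_u(u q) · F(u q | x) / F_u(u q)`, the
second factor tends to `K` uniformly on `𝐗` by tail equivalence, and uniform convergence on a
finite measure space passes to the integral. Finally take `τ = 1 / T`.
-/

theorem TendstoUniformlyOn.tendsto_setIntegral {ι α E : Type*} [MeasurableSpace α]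
    [NormedAddCommGroup E] [NormedSpace ℝ E] {μ : Measure α} [IsFiniteMeasure μ]
    {l : Filter ι} [l.IsCountablyGenerated] {F : ι → α → E} {f : α → E} {s : Set α}
    (hs : MeasurableSet s) (hF : ∀ᶠ i in l, IntegrableOn (F i) s μ)
    (h : TendstoUniformlyOn F f l s) :
    Tendsto (fun i => ∫ x in s, F i x ∂μ) l (𝓝 (∫ x in s, f x ∂μ)) := by
  rcases l.eq_or_neBot with rfl | hl
  · exact tendsto_bot
  have hclose : ∀ᶠ i in l, ∀ x ∈ s, dist (f x) (F i x) < 1 :=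
    Metric.tendstoUniformlyOn_iff.1 h 1 one_pos
  obtain ⟨i₀, hi₀, hclose₀⟩ := (hF.and hclose).exists
  refine tendsto_integral_filter_of_dominated_convergence (fun x => ‖F i₀ x‖ + 2)
    (hF.mono fun i hi => hi.aestronglyMeasurable) ?_ (hi₀.norm.add (integrable_const _)) ?_
  · filter_upwards [hclose] with i hi
    filter_upwards [ae_restrict_mem hs] with x hx
    have h₁ := hi x hx
    have h₂ := hclose₀ x hx
    rw [dist_eq_norm] at h₁ h₂
    calc ‖F i x‖ ≤ ‖f x‖ + ‖f x - F i x‖ := norm_le_insert _ _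
      _ ≤ ‖F i₀ x‖ + ‖f x - F i₀ x‖ + 1 := add_le_add (norm_le_norm_add_norm_sub' _ _) h₁.le
      _ ≤ ‖F i₀ x‖ + 2 := by linarith
  · filter_upwards [ae_restrict_mem hs] with x hx
    exact h.tendsto_at hx

theorem aestronglyMeasurable_restrict_of_measurable_restrict {α β : Type*} [MeasurableSpace α]
    [TopologicalSpace β] [MeasurableSpace β] [OpensMeasurableSpace β]
    [TopologicalSpace.PseudoMetrizableSpace β] [SecondCountableTopology β]
    {μ : Measure α} {f : α → β} {s t : Set α}
    (hf : Measurable (s.domRestrict f)) (hts : t ⊆ s) (ht : MeasurableSet t) :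
    AEStronglyMeasurable f (μ.restrict t) :=
  ((aemeasurable_restrict_iff_comap_subtype ht).2
    (hf.comp (measurable_inclusion hts)).aemeasurable).aestronglyMeasurable

section LowerQuantile

open Set

def IsRegularlyVaryingAtZero (G : ℝ → ℝ) (ρ : ℝ) : Prop :=
  ∀ v > (0:ℝ), Tendsto (fun z => G (v * z) / G z) (𝓝[>] (0:ℝ)) (𝓝 (v ^ ρ))

noncomputable def lowerQuantile (G : ℝ → ℝ) (τ : ℝ) : ℝ := sInf {z | τ < G z}

theorem tendsto_mul_left_nhdsGT_zero {c : ℝ} (hc : 0 < c) :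
    Tendsto (c * ·) (𝓝[>] (0:ℝ)) (𝓝[>] 0) :=
  tendsto_iff_comap.2 (comap_mulLeft_nhdsGT_zero hc).ge

variable {G : ℝ → ℝ} {ρ τ z : ℝ}

theorem IsRegularlyVaryingAtZero.tendsto_nhdsGT_zero (hreg : IsRegularlyVaryingAtZero G ρ)
    (hρ : ρ ≠ 0) (hG : Monotone G) (hpos : ∀ z > 0, 0 < G z) :
    Tendsto G (𝓝[>] 0) (𝓝 0) := by
  have hlim : Tendsto G (𝓝[>] 0) (𝓝 (sInf (G '' Ioi 0))) := hG.tendsto_nhdsGT 0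
  obtain hc | hc := (le_csInf (nonempty_Ioi.image G)
    (forall_mem_image.2 fun z hz => (hpos z hz).le)).eq_or_lt
  · rwa [← hc] at hlim
  -- a positive limit would force `G (2 z) / G z → 1`, while `2 ^ ρ ≠ 1`
  have hratio := (hlim.comp (tendsto_mul_left_nhdsGT_zero two_pos)).div hlim hc.ne'
  rw [div_self hc.ne'] at hratio
  have h2 : (2:ℝ) ^ ρ ≠ 1 := by
    simpa using (Real.rpow_right_inj (x := 2) two_pos (by norm_num)).not.2 hρ
  exact absurd (tendsto_nhds_unique (hreg 2 two_pos) hratio) h2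

theorem bddBelow_setOf_lt_apply (hG0 : ∀ z < 0, G z = 0) (hτ : 0 ≤ τ) :
    BddBelow {z | τ < G z} :=
  ⟨0, fun w hw => not_lt.1 fun hw' => (hG0 w hw' ▸ hw : τ < 0).not_ge hτ⟩

theorem lowerQuantile_le (hG0 : ∀ z < 0, G z = 0) (hτ : 0 ≤ τ) (h : τ < G z) :
    lowerQuantile G τ ≤ z :=
  csInf_le (bddBelow_setOf_lt_apply hG0 hτ) h

theorem apply_le_of_lt_lowerQuantile (hG0 : ∀ z < 0, G z = 0) (hτ : 0 ≤ τ)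
    (h : z < lowerQuantile G τ) : G z ≤ τ :=
  not_lt.1 fun h' => (lowerQuantile_le hG0 hτ h').not_gt h

theorem le_apply_lowerQuantile (hG0 : ∀ z < 0, G z = 0) (hτ : 0 ≤ τ)
    (hrc : ContinuousWithinAt G (Ici (lowerQuantile G τ)) (lowerQuantile G τ))
    (hne : {z | τ < G z}.Nonempty) : τ ≤ G (lowerQuantile G τ) := by
  have hglb : IsGLB {z | τ < G z} (lowerQuantile G τ) :=
    isGLB_csInf hne (bddBelow_setOf_lt_apply hG0 hτ)
  have hmem := (hrc.mono fun w hw => hglb.1 hw).mem_closure_image (hglb.mem_closure hne)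
  exact (closure_Ioi τ ▸ closure_mono (image_subset_iff.2 fun w hw => hw) hmem :
    G (lowerQuantile G τ) ∈ Ici τ)

theorem tendsto_lowerQuantile_nhdsGT_zero (hG : Monotone G) (hG0 : ∀ z < 0, G z = 0)
    (hpos : ∀ z > 0, 0 < G z) (hlim : Tendsto G (𝓝[>] 0) (𝓝 0)) :
    Tendsto (lowerQuantile G) (𝓝[>] 0) (𝓝[>] 0) := by
  have hle : ∀ ε > 0, ∀ᶠ τ in 𝓝[>] (0:ℝ), lowerQuantile G τ ≤ ε := fun ε hε => by
    filter_upwards [Ioo_mem_nhdsGT (hpos ε hε)] with τ hτ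
    exact lowerQuantile_le hG0 hτ.1.le hτ.2
  have hposQ : ∀ᶠ τ in 𝓝[>] (0:ℝ), 0 < lowerQuantile G τ := by
    filter_upwards [Ioo_mem_nhdsGT (hpos 1 one_pos)] with τ hτ
    obtain ⟨z, hz, hz0⟩ := ((hlim.eventually (gt_mem_nhds hτ.1)).and self_mem_nhdsWithin).exists
    refine lt_of_lt_of_le hz0 (le_csInf ⟨1, hτ.2⟩ fun w hw => ?_)
    exact not_lt.1 fun hwz => (hG hwz.le).not_gt (hz.trans hw)
  refine tendsto_nhdsWithin_iff.2 ⟨tendsto_order.2 ⟨fun a ha => ?_, fun a ha => ?_⟩, hposQ⟩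
  · exact hposQ.mono fun τ h => ha.trans h
  · exact (hle (a / 2) (half_pos ha)).mono fun τ h => by linarith

theorem tendsto_inv_mul_apply_lowerQuantile (hreg : IsRegularlyVaryingAtZero G ρ)
    (hG : Monotone G) (hrc : ∀ z, ContinuousWithinAt G (Ici z) z) (hG0 : ∀ z < 0, G z = 0)
    (hpos : ∀ z > 0, 0 < G z) (hlim : Tendsto G (𝓝[>] 0) (𝓝 0)) :
    Tendsto (fun τ => τ⁻¹ * G (lowerQuantile G τ)) (𝓝[>] 0) (𝓝 1) := by
  have hQ := tendsto_lowerQuantile_nhdsGT_zero hG hG0 hpos hlim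
  refine tendsto_order.2 ⟨fun a ha => ?_, fun b hb => ?_⟩
  · filter_upwards [Ioo_mem_nhdsGT (hpos 1 one_pos)] with τ hτ
    have := le_apply_lowerQuantile hG0 hτ.1.le (hrc _) ⟨1, hτ.2⟩
    exact ha.trans_le ((le_inv_mul_iff₀ hτ.1).2 (by rwa [mul_one]))
  obtain ⟨v, hv, hv0, hv1⟩ : ∃ v, b⁻¹ < v ^ ρ ∧ 0 < v ∧ v < 1 := by
    have hcont : Tendsto (· ^ ρ) (𝓝[<] (1:ℝ)) (𝓝 1) := by
      simpa using ((Real.continuousAt_rpow_const 1 ρ (Or.inl one_ne_zero)).tendsto).mono_left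
        nhdsWithin_le_nhds
    exact ((hcont.eventually (lt_mem_nhds (inv_lt_one_of_one_lt₀ hb))).and
      (Ioo_mem_nhdsLT zero_lt_one)).exists
  filter_upwards [((hreg v hv0).comp hQ).eventually (lt_mem_nhds hv), hQ self_mem_nhdsWithin,
    self_mem_nhdsWithin] with τ hratio (hQτ : 0 < lowerQuantile G τ) (hτ : 0 < τ)
  have hvQ : G (v * lowerQuantile G τ) ≤ τ :=
    apply_le_of_lt_lowerQuantile hG0 hτ.le (mul_lt_of_lt_one_left hQτ hv1)
  rw [Function.comp_apply, lt_div_iff₀ (hpos _ hQτ),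
    inv_mul_lt_iff₀ (zero_lt_one.trans hb)] at hratio
  rw [inv_mul_lt_iff₀ hτ]
  nlinarith

theorem tendsto_inv_mul_apply_mul_lowerQuantile (hreg : IsRegularlyVaryingAtZero G ρ)
    (hG : Monotone G) (hrc : ∀ z, ContinuousWithinAt G (Ici z) z) (hG0 : ∀ z < 0, G z = 0)
    (hpos : ∀ z > 0, 0 < G z) (hlim : Tendsto G (𝓝[>] 0) (𝓝 0)) {u : ℝ} (hu : 0 < u) :
    Tendsto (fun τ => τ⁻¹ * G (u * lowerQuantile G τ)) (𝓝[>] 0) (𝓝 (u ^ ρ)) := by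
  have hQ := tendsto_lowerQuantile_nhdsGT_zero hG hG0 hpos hlim
  have h := ((hreg u hu).comp hQ).mul
    (tendsto_inv_mul_apply_lowerQuantile hreg hG hrc hG0 hpos hlim)
  rw [mul_one] at h
  refine h.congr' ?_
  filter_upwards [hQ self_mem_nhdsWithin] with τ (hQτ : 0 < lowerQuantile G τ)
  have := (hpos _ hQτ).ne'
  simp only [Function.comp_apply]
  field_simp

end LowerQuantile

theorem mean_measure_convergence_type3_general
    (d : ℕ)
    (μ : Measure (Fin d → ℝ)) [IsProbabilityMeasure μ]
    (Xs : Set (Fin d → ℝ))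
    (F : (Fin d → ℝ) → ℝ → ℝ)
    (hFrange : ∀ x ∈ Xs, ∀ z : ℝ, F x z ∈ Set.Icc (0:ℝ) 1)
    (Fu : ℝ → ℝ)
    (hFumono : Monotone Fu)
    (hFurc : ∀ z : ℝ, ContinuousWithinAt Fu (Set.Ici z) z)
    (K : (Fin d → ℝ) → ℝ)
    (ξ : ℝ) (hξ : ξ < 0)
    (hFu0 : ∀ z < (0:ℝ), Fu z = 0)
    (hFupos : ∀ z > (0:ℝ), 0 < Fu z)
    (hreg : ∀ v > (0:ℝ), Tendsto (fun z => Fu (v * z) / Fu z) (𝓝[>] (0:ℝ)) (𝓝 (v ^ (-1/ξ))))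
    (htaileq : TendstoUniformlyOn (fun z x => F x z / Fu z) K (𝓝[>] (0:ℝ)) Xs)
    (hFmeas : ∀ z : ℝ, Measurable (Xs.restrict (fun x => F x z)))
    :
    ∀ u > (0:ℝ), ∀ B : Set (Fin d → ℝ), MeasurableSet B → B ⊆ Xs →
      Tendsto (fun T : ℕ =>
          (T:ℝ) * ∫ x in B, F x (u * sInf {z | (1:ℝ) / (T:ℝ) < Fu z}) ∂μ) atTop
        (𝓝 (u ^ (-1/ξ) * ∫ x in B, K x ∂μ)) := by
  intro u hu B hB hBXs
  have hlim := IsRegularlyVaryingAtZero.tendsto_nhdsGT_zero hreg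
    (div_ne_zero (by norm_num) hξ.ne) hFumono hFupos
  have hz : Tendsto (fun τ => u * lowerQuantile Fu τ) (𝓝[>] 0) (𝓝[>] 0) :=
    (tendsto_mul_left_nhdsGT_zero hu).comp
      (tendsto_lowerQuantile_nhdsGT_zero hFumono hFu0 hFupos hlim)
  have hratio : TendstoUniformlyOn
      (fun τ x => F x (u * lowerQuantile Fu τ) / Fu (u * lowerQuantile Fu τ)) K (𝓝[>] 0) B :=
    fun s hs => hz.eventually (htaileq.mono hBXs s hs)
  have hint (z : ℝ) : IntegrableOn (fun x => F x z / Fu z) B μ := by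
    refine (Integrable.of_bound
      (aestronglyMeasurable_restrict_of_measurable_restrict (hFmeas z) hBXs hB) 1 ?_).div_const _
    filter_upwards [ae_restrict_mem hB] with x hx
    have := hFrange x (hBXs hx) z
    rw [Real.norm_eq_abs, abs_of_nonneg this.1]
    exact this.2
  have hmain : Tendsto (fun τ => τ⁻¹ * ∫ x in B, F x (u * lowerQuantile Fu τ) ∂μ) (𝓝[>] 0)
      (𝓝 (u ^ (-1/ξ) * ∫ x in B, K x ∂μ)) := by
    refine ((tendsto_inv_mul_apply_mul_lowerQuantile hreg hFumono hFurc hFu0 hFupos hlim hu).mul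
      (hratio.tendsto_setIntegral hB (.of_forall fun τ => hint _))).congr' ?_
    filter_upwards [hz self_mem_nhdsWithin] with τ (hτ : 0 < u * lowerQuantile Fu τ)
    rw [integral_div]
    field_simp [(hFupos _ hτ).ne']
  have hT : Tendsto (fun T : ℕ => (1:ℝ) / T) atTop (𝓝[>] 0) :=
    (tendsto_inv_atTop_nhdsGT_zero.comp tendsto_natCast_atTop_atTop).congr fun _ =>
      (one_div _).symm
  refine (hmain.comp hT).congr fun T => ?_
  simp [lowerQuantile]

theorem mean_measure_convergence_type3
    (d : ℕ) (hd : 1 ≤ d)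
    (μ : Measure (Fin d → ℝ)) [IsProbabilityMeasure μ]
    (Xs : Set (Fin d → ℝ))
    (hXssupp : ∀ x, x ∈ Xs ↔ ∀ U ∈ 𝓝 x, 0 < μ U)
    (hXscpt : IsCompact Xs)
    (hposdef : (Matrix.of fun i j : Fin d => ∫ x, x i * x j ∂μ).PosDef)
    (hmean : ∀ i : Fin d, (∫ x, x i ∂μ) = if (i : ℕ) = 0 then (1:ℝ) else 0)
    (η : ℝ) (hη : η ∈ Set.Ioc (0:ℝ) 1)
    (γ : ℝ → Fin d → ℝ)
    (F : (Fin d → ℝ) → ℝ → ℝ)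
    (hFmono : ∀ x ∈ Xs, Monotone (F x))
    (hFrc : ∀ x ∈ Xs, ∀ z : ℝ, ContinuousWithinAt (F x) (Set.Ici z) z)
    (hFrange : ∀ x ∈ Xs, ∀ z : ℝ, F x z ∈ Set.Icc (0:ℝ) 1)
    (hlin : ∀ τ ∈ Set.Ioc (0:ℝ) η, ∀ x ∈ Xs, sInf {z | τ < F x z} = ∑ i, x i * γ τ i)
    (Fu : ℝ → ℝ)
    (hFumono : Monotone Fu)
    (hFurc : ∀ z : ℝ, ContinuousWithinAt Fu (Set.Ici z) z)
    (hFurange : ∀ z : ℝ, Fu z ∈ Set.Icc (0:ℝ) 1)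
    (hFuinv : ∀ τ ∈ Set.Ioc (0:ℝ) η, sInf {z | τ < Fu z} = ∑ i, (∫ x, x i ∂μ) * γ τ i)
    (K : (Fin d → ℝ) → ℝ)
    (hKcont : ContinuousOn K Xs)
    (hKbdd : BddAbove (K '' Xs))
    (hKpos : ∀ x ∈ Xs, 0 < K x)
    (ξ : ℝ) (hξ : ξ < 0)
    (hFu0 : ∀ z < (0:ℝ), Fu z = 0)
    (hFupos : ∀ z > (0:ℝ), 0 < Fu z)
    (hreg : ∀ v > (0:ℝ), Tendsto (fun z => Fu (v * z) / Fu z) (𝓝[>] (0:ℝ)) (𝓝 (v ^ (-1/ξ))))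
    (htaileq : TendstoUniformlyOn (fun z x => F x z / Fu z) K (𝓝[>] (0:ℝ)) Xs)
    (hFmeas : ∀ z : ℝ, Measurable (Xs.restrict (fun x => F x z)))
    :
    ∀ u > (0:ℝ), ∀ B : Set (Fin d → ℝ), MeasurableSet B → B ⊆ Xs →
      Tendsto (fun T : ℕ =>
          (T:ℝ) * ∫ x in B, F x (u * sInf {z | (1:ℝ) / (T:ℝ) < Fu z}) ∂μ) atTop
        (𝓝 (u ^ (-1/ξ) * ∫ x in B, K x ∂μ)) :=
  mean_measure_convergence_type3_general d μ Xs F hFrange Fu hFumono hFurc K ξ hξ hFu0 hFupos hreg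
    htaileq hFmeas
end
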